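/- Every graph G with minimum degree at least 2 contains an induced linear forest with at least ∑_{v ∈ V(G)} 2/(d(v)+1) vertices, where d(v) denotes the degree of v in G. -/

import Mathlib

open SimpleGraph Finset

noncomputable def w : ℕ → ℝ := fun d =>
  if d = 0 then 1 else if d = 1 then 5/6 else 2/(d+1)

lemma w_nonneg (d : ℕ) : 0 ≤ w d := by
  unfold w; split_ifs <;> positivity

lemma w_le_one (d : ℕ) : w d ≤ 1 := by
  unfold w
  split_ifs with h0 h1
  · norm_num
  · norm_num
  · rw [div_le_one (by positivity)]
    have : (2:ℝ) ≤ (d:ℝ) := by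
      have : 2 ≤ d := by omega
      exact_mod_cast this
    linarith

lemma w_eq_of_two_le {d : ℕ} (h : 2 ≤ d) : w d = 2/(d+1) := by
  unfold w; rw [if_neg (by omega), if_neg (by omega)]

lemma wdiff {d D : ℕ} (hd : 1 ≤ d) (hdD : d ≤ D) (hD : 3 ≤ D) :
    2/((D:ℝ)*((D:ℝ)+1)) ≤ w (d-1) - w d := by
  have hDR : (3:ℝ) ≤ (D:ℝ) := by exact_mod_cast hD
  have hpos : (0:ℝ) < (D:ℝ)*((D:ℝ)+1) := by positivity
  have h12 : (12:ℝ) ≤ (D:ℝ)*((D:ℝ)+1) := by nlinarith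
  have key16 : 2/((D:ℝ)*((D:ℝ)+1)) ≤ 1/6 := by
    rw [div_le_div_iff₀ hpos (by norm_num)]; linarith
  rcases Nat.lt_or_ge d 3 with h3 | h3
  · interval_cases d
    · rw [show w 0 - w 1 = 1/6 by norm_num [w]]; exact key16
    · have : w 1 - w 2 = 1/6 := by norm_num [w]
      rw [show (2:ℕ)-1 = 1 from rfl, this]; exact key16
  · have hdR : (3:ℝ) ≤ (d:ℝ) := by exact_mod_cast h3
    have hdDR : (d:ℝ) ≤ (D:ℝ) := by exact_mod_cast hdD
    have e1 : w (d-1) = 2/(d:ℝ) := by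
      rw [w_eq_of_two_le (by omega)]
      have h1 : ((d-1:ℕ):ℝ) = (d:ℝ) - 1 := by
        have h2 : (1:ℕ) ≤ d := hd; push_cast [h2]; ring
      rw [h1]; ring_nf
    have e2 : w d = 2/((d:ℝ)+1) := by rw [w_eq_of_two_le (by omega)]
    rw [e1, e2]
    have : 2/(d:ℝ) - 2/((d:ℝ)+1) = 2/((d:ℝ)*((d:ℝ)+1)) := by
      field_simp; ring
    rw [this]
    apply div_le_div_of_nonneg_left (by norm_num) (by positivity)
    nlinarith

variable {V : Type} [DecidableEq V] {G : SimpleGraph V}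

lemma mem_support_tail_iff {v x : V} {p : G.Walk v v} (hp : p.support.tail ≠ []) :
    x ∈ p.support ↔ x ∈ p.support.tail := by
  constructor
  · intro hx
    rw [SimpleGraph.Walk.mem_support_iff] at hx
    rcases hx with rfl | hx
    · have hlast : p.support.tail.getLast hp = x := by
        rw [List.getLast_tail]
        exact p.getLast_support
      have hm := List.getLast_mem hp; rwa [hlast] at hm
    · exact hx
  · intro hx
    rw [SimpleGraph.Walk.mem_support_iff]; exact Or.inr hx

lemma tail_ne_nil_of_isCycle {v : V} {p : G.Walk v v} (hp : p.IsCycle) :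
    p.support.tail ≠ [] := by
  have h3 := hp.three_le_length
  have : p.support.tail.length = p.length := by
    have := p.length_support
    have h := List.length_tail (l := p.support)
    omega
  intro h; rw [h] at this; simp at this; omega

lemma mem_support_rotate {v u x : V} {c : G.Walk v v} (hc : c.IsCycle) (hu : u ∈ c.support) :
    x ∈ (c.rotate u hu).support ↔ x ∈ c.support := by
  rw [mem_support_tail_iff (tail_ne_nil_of_isCycle (hc.rotate hu)),
    mem_support_tail_iff (tail_ne_nil_of_isCycle hc)]
  exact (SimpleGraph.Walk.support_rotate c u hu).perm.mem_iff

lemma exists_two_nbrs {v u : V} {c : G.Walk v v} (hc : c.IsCycle) (hu : u ∈ c.support) :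
    ∃ a b, a ≠ b ∧ G.Adj u a ∧ G.Adj u b ∧ a ∈ c.support ∧ b ∈ c.support := by
  have hc' := hc.rotate hu
  have hmem : ∀ x, x ∈ (c.rotate u hu).support → x ∈ c.support :=
    fun x hx => (mem_support_rotate hc hu).1 hx
  set c' : G.Walk u u := c.rotate u hu with hc'def
  clear_value c'
  have h1 : ¬c'.Nil := by
    rw [SimpleGraph.Walk.not_nil_iff_lt_length]
    have := hc'.three_le_length; omega
  obtain ⟨a, hua, p, hcp⟩ := SimpleGraph.Walk.not_nil_iff.mp h1
  have hp2 : 2 ≤ p.length := by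
    have := hc'.three_le_length; rw [hcp] at this
    simp only [SimpleGraph.Walk.length_cons] at this; omega
  have h2 : ¬p.reverse.Nil := by
    rw [SimpleGraph.Walk.not_nil_iff_lt_length]
    rw [SimpleGraph.Walk.length_reverse]; omega
  obtain ⟨b, hub, r, hrq⟩ := SimpleGraph.Walk.not_nil_iff.mp h2
  have hbp : b ∈ p.support := by
    have : b ∈ p.reverse.support := by
      rw [hrq]; simp [SimpleGraph.Walk.support_cons]
    rwa [SimpleGraph.Walk.support_reverse, List.mem_reverse] at this
  have hap : a ∈ c'.support := by
    rw [hcp]; simp [SimpleGraph.Walk.support_cons]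
  have hbc : b ∈ c'.support := by
    rw [hcp]; simp [SimpleGraph.Walk.support_cons]; right; exact hbp
  refine ⟨a, b, ?_, hua, hub, hmem _ hap, hmem _ hbc⟩
  intro hab
  subst hab
  have hedges : s(u,a) ∉ p.edges := by
    have ht : c'.IsTrail := hc'.isTrail
    rw [hcp] at ht
    exact (SimpleGraph.Walk.isTrail_cons _ _).mp ht |>.2
  apply hedges
  have : s(u,a) ∈ p.reverse.edges := by
    rw [hrq]; simp [SimpleGraph.Walk.edges_cons]
  rwa [SimpleGraph.Walk.edges_reverse, List.mem_reverse] at this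

lemma closure_walk {P Q : Finset V}
    (hP : ∀ x ∈ P, ∀ y, G.Adj x y → y ∈ Q → y ∈ P) :
    ∀ {a b : V} (p : G.Walk a b), (∀ x ∈ p.support, x ∈ Q) → a ∈ P →
      ∀ x ∈ p.support, x ∈ P := by
  intro a b p
  induction p with
  | nil => intro _ ha x hx; simp at hx; subst hx; exact ha
  | cons h q ih =>
    intro hQ ha x hx
    rename_i u u' w
    have hu' : u' ∈ P := hP u ha u' h (hQ u' (by simp [SimpleGraph.Walk.support_cons]))
    rw [SimpleGraph.Walk.support_cons, List.mem_cons] at hx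
    rcases hx with rfl | hx
    · exact ha
    · exact ih (fun y hy => hQ y (by simp [SimpleGraph.Walk.support_cons, hy])) hu' x hx

variable {V : Type} [Fintype V] [DecidableEq V]

def dA (G : SimpleGraph V) [DecidableRel G.Adj] (A : Finset V) (v : V) : ℕ :=
  (A.filter (fun y => G.Adj v y)).card

lemma main_ind (G : SimpleGraph V) [DecidableRel G.Adj] :
    ∀ (n : ℕ) (A : Finset V), A.card ≤ n →
    ∃ S : Finset V, S ⊆ A ∧
      (∀ ⦃a : V⦄ (c : G.Walk a a), c.IsCycle → ∃ x ∈ c.support, x ∉ S) ∧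
      (∀ v ∈ S, dA G S v ≤ 2) ∧
      ∑ v ∈ A, w (dA G A v) ≤ (S.card : ℝ) := by
  intro n
  induction n with
  | zero =>
    intro A hA
    refine ⟨∅, by simp, ?_, by simp, ?_⟩
    · intro a c hc
      exact ⟨a, c.start_mem_support, by simp⟩
    · rw [Finset.card_eq_zero.mp (Nat.le_zero.mp hA)]
      simp
  | succ n ih =>
    intro A hA
    by_cases hA3 : ∃ v ∈ A, 3 ≤ dA G A v
    · -- Case 2 : high degree vertex, delete max-degree vertex
      obtain ⟨v₁, hv₁A, hv₁3⟩ := hA3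
      obtain ⟨v, hvA, hmax⟩ := A.exists_max_image (fun u => dA G A u) ⟨v₁, hv₁A⟩

      set D := dA G A v with hDdef
      have hD3 : 3 ≤ D := le_trans hv₁3 (hmax v₁ hv₁A)
      set B := A.erase v with hBdef
      have hcard : B.card ≤ n := by
        rw [hBdef, Finset.card_erase_of_mem hvA]
        have : 1 ≤ A.card := Finset.card_pos.mpr ⟨v, hvA⟩
        omega
      obtain ⟨S, hSsub, hGood, hdeg, hsum⟩ := ih B hcard
      refine ⟨S, hSsub.trans (Finset.erase_subset _ _), hGood, hdeg, le_trans ?_ hsum⟩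
      -- show ∑ over A ≤ ∑ over B with updated degrees
      have hDR : (0:ℝ) < (D:ℝ) := by
        have : 0 < D := by omega
        exact_mod_cast this
      have hNv : B.filter (fun u => G.Adj v u) = A.filter (fun u => G.Adj v u) := by
        rw [hBdef, Finset.filter_erase, Finset.erase_eq_of_notMem]
        simp [G.irrefl]
      have hNvcard : (B.filter (fun u => G.Adj v u)).card = D := by
        rw [hNv, hDdef]; rfl
      have hterm : ∀ u ∈ B, w (dA G A u) + (if G.Adj v u then 2/((D:ℝ)*((D:ℝ)+1)) else 0)
          ≤ w (dA G B u) := by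
        intro u hu
        have huA : u ∈ A := Finset.mem_of_mem_erase (hBdef ▸ hu)
        by_cases hadj : G.Adj v u
        · have hvmem : v ∈ A.filter (fun y => G.Adj u y) :=
            Finset.mem_filter.mpr ⟨hvA, hadj.symm⟩
          have h1 : dA G B u = dA G A u - 1 := by
            unfold dA
            rw [hBdef, Finset.filter_erase, Finset.card_erase_of_mem hvmem]
          have hd1 : 1 ≤ dA G A u := by
            have : 0 < (A.filter (fun y => G.Adj u y)).card :=
              Finset.card_pos.mpr ⟨v, hvmem⟩
            exact this
          have hdD : dA G A u ≤ D := hmax u huA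
          have := wdiff hd1 hdD hD3
          rw [h1, if_pos hadj]
          linarith
        · have h1 : dA G B u = dA G A u := by
            unfold dA
            rw [hBdef, Finset.filter_erase, Finset.erase_eq_of_notMem]
            intro hmem
            exact hadj ((Finset.mem_filter.mp hmem).2.symm)
          rw [h1, if_neg hadj]
          simp
      have hsum2 : ∑ u ∈ B, (w (dA G A u) + (if G.Adj v u then 2/((D:ℝ)*((D:ℝ)+1)) else 0))
          ≤ ∑ u ∈ B, w (dA G B u) := Finset.sum_le_sum hterm
      rw [Finset.sum_add_distrib] at hsum2
      have hite : ∑ u ∈ B, (if G.Adj v u then 2/((D:ℝ)*((D:ℝ)+1)) else 0)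
          = (D:ℝ) * (2/((D:ℝ)*((D:ℝ)+1))) := by
        rw [← Finset.sum_filter, Finset.sum_const, hNvcard, nsmul_eq_mul]
      rw [hite] at hsum2
      have hwD : w D ≤ (D:ℝ) * (2/((D:ℝ)*((D:ℝ)+1))) := by
        rw [w_eq_of_two_le (by omega)]
        rw [mul_div_assoc']
        rw [div_le_div_iff₀ (by positivity) (by positivity)]
        ring_nf
        nlinarith
      have hsplit : ∑ u ∈ A, w (dA G A u) = w D + ∑ u ∈ B, w (dA G A u) := by
        rw [hBdef, hDdef]
        exact (Finset.add_sum_erase A (fun u => w (dA G A u)) hvA).symm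
      rw [hsplit]
      linarith
    · push_neg at hA3
      by_cases hcyc : ∃ (a : V) (c : G.Walk a a), c.IsCycle ∧ ∀ x ∈ c.support, x ∈ A
      · -- Case 3 : cycle inside A
        obtain ⟨v₀, c, hc, hsup⟩ := hcyc
        set C : Finset V := c.support.toFinset with hCdef
        have hCA : C ⊆ A := fun x hx => hsup x (List.mem_toFinset.mp hx)
        have hv₀C : v₀ ∈ C := List.mem_toFinset.mpr c.start_mem_support
        -- key fact for any cycle inside A
        have hkey : ∀ (a' : V) (c' : G.Walk a' a'), c'.IsCycle → (∀ x ∈ c'.support, x ∈ A) →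
            ∀ u ∈ c'.support, dA G A u = 2 ∧ (∀ y, G.Adj u y → y ∈ A → y ∈ c'.support) := by
          intro a' c' hc' hsup' u hu
          obtain ⟨a, b, hab, hua, hub, haS, hbS⟩ := exists_two_nbrs hc' hu
          have hsub : ({a, b} : Finset V) ⊆ A.filter (fun y => G.Adj u y) := by
            intro y hy
            rcases Finset.mem_insert.mp hy with rfl | hy
            · exact Finset.mem_filter.mpr ⟨hsup' _ haS, hua⟩
            · rw [Finset.mem_singleton] at hy; subst hy
              exact Finset.mem_filter.mpr ⟨hsup' _ hbS, hub⟩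
          have hle : (A.filter (fun y => G.Adj u y)).card ≤ 2 :=
            Nat.lt_succ_iff.mp (hA3 u (hsup' u hu))
          have heq : ({a, b} : Finset V) = A.filter (fun y => G.Adj u y) :=
            Finset.eq_of_subset_of_card_le hsub (by rw [Finset.card_pair hab]; exact hle)
          constructor
          · show (A.filter (fun y => G.Adj u y)).card = 2
            rw [← heq, Finset.card_pair hab]
          · intro y h1 h2
            have : y ∈ ({a, b} : Finset V) := by
              rw [heq]; exact Finset.mem_filter.mpr ⟨h2, h1⟩
            rcases Finset.mem_insert.mp this with rfl | hy
            · exact haS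
            · rw [Finset.mem_singleton] at hy; subst hy; exact hbS
        have hd2 : ∀ u ∈ C, dA G A u = 2 :=
          fun u hu => (hkey v₀ c hc hsup u (List.mem_toFinset.mp hu)).1
        have hclosed : ∀ u ∈ C, ∀ y, G.Adj u y → y ∈ A → y ∈ C := by
          intro u hu y h1 h2
          exact List.mem_toFinset.mpr ((hkey v₀ c hc hsup u (List.mem_toFinset.mp hu)).2 y h1 h2)
        have hC3 : 3 ≤ C.card := by
          obtain ⟨a, b, hab, hua, hub, haS, hbS⟩ := exists_two_nbrs hc c.start_mem_support
          have h1 : a ≠ v₀ := fun h => G.irrefl (h ▸ hua)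
          have h2 : b ≠ v₀ := fun h => G.irrefl (h ▸ hub)
          have hsub : ({v₀, a, b} : Finset V) ⊆ C := by
            intro y hy
            rcases Finset.mem_insert.mp hy with rfl | hy
            · exact hv₀C
            · rcases Finset.mem_insert.mp hy with rfl | hy
              · exact List.mem_toFinset.mpr haS
              · rw [Finset.mem_singleton] at hy; subst hy
                exact List.mem_toFinset.mpr hbS
          have : ({v₀, a, b} : Finset V).card = 3 := by
            rw [Finset.card_insert_of_notMem (by simp [h1.symm, h2.symm]),
              Finset.card_pair hab]
          rw [← this]
          exact Finset.card_le_card hsub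
        have hcard : (A \ C).card ≤ n := by
          have hlt : (A \ C).card < A.card := by
            apply Finset.card_lt_card
            constructor
            · exact Finset.sdiff_subset
            · intro hsub
              have := hsub (hCA hv₀C)
              rw [Finset.mem_sdiff] at this
              exact this.2 hv₀C
          omega
        obtain ⟨S', hS'sub, hGood', hdeg', hsum'⟩ := ih (A \ C) hcard
        have hS'AC : ∀ x ∈ S', x ∈ A ∧ x ∉ C :=
          fun x hx => Finset.mem_sdiff.mp (hS'sub hx)
        have hcross : ∀ p ∈ S', ∀ q ∈ C, ¬ G.Adj p q := by
          intro p hp q hq hadj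
          exact (hS'AC p hp).2 (hclosed q hq p hadj.symm (hS'AC p hp).1)
        refine ⟨S' ∪ C.erase v₀, ?_, ?_, ?_, ?_⟩
        · intro x hx
          rcases Finset.mem_union.mp hx with hx | hx
          · exact (hS'AC x hx).1
          · exact hCA (Finset.mem_of_mem_erase hx)
        · -- Good
          intro a' c₂ hc₂
          by_contra hco
          push_neg at hco
          have ha' := hco a' c₂.start_mem_support
          rcases Finset.mem_union.mp ha' with ha'S | ha'C
          · have hcl : ∀ x ∈ S', ∀ y, G.Adj x y → y ∈ S' ∪ C.erase v₀ → y ∈ S' := by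
              intro x hx y hadj hyS
              rcases Finset.mem_union.mp hyS with hy | hy
              · exact hy
              · exact absurd hadj (hcross x hx y (Finset.mem_of_mem_erase hy))
            obtain ⟨x, hx, hx'⟩ := hGood' c₂ hc₂
            exact hx' (closure_walk hcl c₂ hco ha'S x hx)
          · have hcl : ∀ x ∈ C.erase v₀, ∀ y, G.Adj x y → y ∈ S' ∪ C.erase v₀ →
                y ∈ C.erase v₀ := by
              intro x hx y hadj hyS
              rcases Finset.mem_union.mp hyS with hy | hy
              · exact absurd hadj.symm (hcross y hy x (Finset.mem_of_mem_erase hx))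
              · exact hy
            have hall : ∀ x ∈ c₂.support, x ∈ C.erase v₀ :=
              closure_walk hcl c₂ hco ha'C
            have hsupA : ∀ x ∈ c₂.support, x ∈ A :=
              fun x hx => hCA (Finset.mem_of_mem_erase (hall x hx))
            have hcl₂ : ∀ x ∈ c₂.support.toFinset, ∀ y, G.Adj x y → y ∈ A →
                y ∈ c₂.support.toFinset := by
              intro x hx y h1 h2
              exact List.mem_toFinset.mpr
                ((hkey a' c₂ hc₂ hsupA x (List.mem_toFinset.mp hx)).2 y h1 h2)
            have ha'c : a' ∈ c.support :=
              List.mem_toFinset.mp (Finset.mem_of_mem_erase (hall a' c₂.start_mem_support))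
            have hallC : ∀ x ∈ (c.rotate a' ha'c).support, x ∈ c₂.support.toFinset :=
              closure_walk hcl₂ (c.rotate a' ha'c)
                (fun x hx => hsup x ((mem_support_rotate hc ha'c).1 hx))
                (List.mem_toFinset.mpr c₂.start_mem_support)
            have hv₀mem : v₀ ∈ c₂.support.toFinset :=
              hallC v₀ ((mem_support_rotate hc ha'c).2 c.start_mem_support)
            have := hall v₀ (List.mem_toFinset.mp hv₀mem)
            exact Finset.notMem_erase v₀ C this
        · -- degrees
          intro x hx
          rcases Finset.mem_union.mp hx with hxS | hxC
          · have hsub : (S' ∪ C.erase v₀).filter (fun y => G.Adj x y) ⊆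
                S'.filter (fun y => G.Adj x y) := by
              intro y hy
              rw [Finset.mem_filter] at hy ⊢
              rcases Finset.mem_union.mp hy.1 with h | h
              · exact ⟨h, hy.2⟩
              · exact absurd hy.2 (hcross x hxS y (Finset.mem_of_mem_erase h))
            exact le_trans (Finset.card_le_card hsub) (hdeg' x hxS)
          · have hsub : (S' ∪ C.erase v₀).filter (fun y => G.Adj x y) ⊆
                A.filter (fun y => G.Adj x y) := by
              apply Finset.filter_subset_filter
              intro y hy
              rcases Finset.mem_union.mp hy with h | h
              · exact (hS'AC y h).1
              · exact hCA (Finset.mem_of_mem_erase h)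
            calc ((S' ∪ C.erase v₀).filter (fun y => G.Adj x y)).card
                ≤ (A.filter (fun y => G.Adj x y)).card := Finset.card_le_card hsub
              _ = 2 := hd2 x (Finset.mem_of_mem_erase hxC)
        · -- sum bound
          have hdisj : Disjoint S' (C.erase v₀) := by
            rw [Finset.disjoint_left]
            intro x hx hx'
            exact (hS'AC x hx).2 (Finset.mem_of_mem_erase hx')
          have hcardS : (S' ∪ C.erase v₀).card = S'.card + (C.card - 1) := by
            rw [Finset.card_union_of_disjoint hdisj, Finset.card_erase_of_mem hv₀C]
          have hdeq : ∀ v ∈ A \ C, dA G (A \ C) v = dA G A v := by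
            intro v hv
            unfold dA
            congr 1
            ext y
            rw [Finset.mem_filter, Finset.mem_filter, Finset.mem_sdiff]
            constructor
            · rintro ⟨⟨h1, _⟩, h3⟩; exact ⟨h1, h3⟩
            · rintro ⟨h1, h3⟩
              refine ⟨⟨h1, fun hyC => ?_⟩, h3⟩
              have := hclosed y hyC v h3.symm (Finset.mem_sdiff.mp hv).1
              exact (Finset.mem_sdiff.mp hv).2 this
          have hsplitA : ∑ v ∈ A \ C, w (dA G A v) + ∑ v ∈ C, w (dA G A v)
              = ∑ v ∈ A, w (dA G A v) := Finset.sum_sdiff hCA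
          have h1 : ∑ v ∈ A \ C, w (dA G A v) ≤ (S'.card : ℝ) := by
            rw [show ∑ v ∈ A \ C, w (dA G A v) = ∑ v ∈ A \ C, w (dA G (A \ C) v) from
              Finset.sum_congr rfl (fun v hv => by rw [hdeq v hv])]
            exact hsum'
          have h2 : ∑ v ∈ C, w (dA G A v) = (C.card : ℝ) * (2/3) := by
            have he : ∑ v ∈ C, w (dA G A v) = ∑ _v ∈ C, w 2 :=
              Finset.sum_congr rfl (fun v hv => by rw [hd2 v hv])
            rw [he, Finset.sum_const, nsmul_eq_mul]
            norm_num [w]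
          have hCR : (3:ℝ) ≤ (C.card : ℝ) := by exact_mod_cast hC3
          have h3 : (C.card : ℝ) * (2/3) ≤ ((C.card - 1 : ℕ) : ℝ) := by
            have : ((C.card - 1 : ℕ) : ℝ) = (C.card : ℝ) - 1 := by
              have : 1 ≤ C.card := by omega
              push_cast [this]; ring
            rw [this]; linarith
          rw [hcardS, ← hsplitA]
          push_cast
          push_cast at h3
          linarith
      · -- Case 1 : no cycle, max degree ≤ 2 : take S = A
        push_neg at hcyc
        refine ⟨A, le_refl _, fun a c hc => hcyc a c hc,
          fun v hv => Nat.lt_succ_iff.mp (hA3 v hv), ?_⟩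
        calc ∑ v ∈ A, w (dA G A v) ≤ ∑ _v ∈ A, (1:ℝ) :=
              Finset.sum_le_sum (fun i _ => w_le_one _)
          _ = (A.card : ℝ) := by simp

/-- A graph is a linear forest if it is acyclic and every vertex has degree at most 2
(equivalently, every connected component is a path; a single vertex counts as a path). -/
def IsLinearForest {α : Type*} (H : SimpleGraph α) : Prop :=
  H.IsAcyclic ∧ ∀ v, (H.neighborSet v).ncard ≤ 2

/-- Every graph with minimum degree at least 2 contains an induced linear forest
with at least ∑_v 2/(d(v)+1) vertices. -/
theorem stmt0 {V : Type} [Fintype V] [DecidableEq V] (G : SimpleGraph V)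
    [DecidableRel G.Adj] (hmin : ∀ v, 2 ≤ G.degree v) :
    ∃ S : Finset V, IsLinearForest (G.induce (S : Set V)) ∧
      ∑ v, (2 : ℝ) / ((G.degree v : ℝ) + 1) ≤ (S.card : ℝ) := by
  obtain ⟨S, hSsub, hGood, hdeg, hsum⟩ :=
    main_ind G (Fintype.card V) Finset.univ (le_of_eq Finset.card_univ)
  refine ⟨S, ⟨?_, ?_⟩, ?_⟩
  · -- acyclic
    intro v c hc
    have hinj : Function.Injective ⇑(SimpleGraph.Embedding.induce (G := G) (S : Set V)).toHom :=
      Subtype.val_injective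
    have hmc := hc.map (f := (SimpleGraph.Embedding.induce (G := G) (S : Set V)).toHom) hinj
    obtain ⟨x, hx, hx'⟩ := hGood _ hmc
    rw [SimpleGraph.Walk.support_map, List.mem_map] at hx
    obtain ⟨y, _, rfl⟩ := hx
    exact hx' y.2
  · -- degrees
    intro v
    have hfin : ((G.induce (S : Set V)).neighborSet v).Finite := Set.toFinite _
    rw [Set.ncard_eq_toFinset_card _ hfin]
    refine le_trans (Finset.card_le_card_of_injOn (fun u => (u : V)) ?_ ?_) (hdeg ↑v v.2)
    · intro u hu
      rw [Finset.mem_coe, Set.Finite.mem_toFinset] at hu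
      exact Finset.mem_coe.mpr (Finset.mem_filter.mpr ⟨u.2, hu⟩)
    · exact Subtype.val_injective.injOn
  · -- sum
    have : ∑ v, (2 : ℝ) / ((G.degree v : ℝ) + 1) = ∑ v ∈ Finset.univ, w (dA G Finset.univ v) := by
      apply Finset.sum_congr rfl
      intro v _
      have hdv : dA G Finset.univ v = G.degree v := by
        unfold dA
        rw [SimpleGraph.degree, SimpleGraph.neighborFinset_eq_filter]
      rw [hdv, w_eq_of_two_le (hmin v)]
    rw [this]
    exact hsum
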